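/- arXiv:2305.19482 — 4 statements merged into one kernel-verified Lean document; each statement's English description precedes it below -/
import Mathlib

section
/- If p is a random variable uniformly distributed on [0,1], Z is an independent real random variable whose distribution is symmetric about 0, and Φ is the standard normal CDF, then p̃ = Φ(Φ⁻¹(p) + Z) has a distribution symmetric about 1/2: ℙ(p̃ ≤ t) = ℙ(p̃ ≥ 1 - t) for all t ∈ [0,1]. -/
open MeasureTheory ProbabilityTheory Set Real

/-- The standard normal CDF `Φ`. -/
noncomputable def stdNormalCDF (x : ℝ) : ℝ :=
  ∫ t in Iic x, (Real.sqrt (2 * π))⁻¹ * Real.exp (-t ^ 2 / 2)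

/-- The standard normal quantile function `Φ⁻¹`. -/
noncomputable def stdNormalQuantile : ℝ → ℝ := Function.invFun stdNormalCDF

/-! The reflection `u ↦ 1 - u` preserves the uniform law on `[0,1]` and `z ↦ -z` preserves the
law of `Z`, so by independence `(1 - p, -Z)` has the same joint law as `(p, Z)`. Since
`Φ(-x) = 1 - Φ(x)`, also `Φ⁻¹(1 - u) = -Φ⁻¹(u)` for `u ∈ (0,1)`, so evaluating
`(u, z) ↦ Φ(Φ⁻¹(u) + z)` at `(1 - p, -Z)` gives `1 - p̃` almost surely (`Φ⁻¹ = invFun Φ` is a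
true inverse only on `(0,1)`, which `p` avoids with probability zero). Hence `p̃` and `1 - p̃` are
identically distributed. -/

namespace ProbabilityTheory

variable {μ : Measure ℝ} [IsProbabilityMeasure μ]

theorem continuous_cdf [NullSingletonClass μ] : Continuous (cdf μ) := by
  refine continuous_iff_continuousAt.2 fun x => ?_
  rw [(monotone_cdf μ).continuousAt_iff_leftLim_eq_rightLim, StieltjesFunction.rightLim_eq]
  have h := (cdf μ).measure_singleton x
  rw [measure_cdf, measure_singleton, eq_comm, ENNReal.ofReal_eq_zero, sub_nonpos] at h
  exact le_antisymm ((monotone_cdf μ).leftLim_le le_rfl) h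

theorem Ioo_subset_range_cdf [NullSingletonClass μ] : Ioo 0 1 ⊆ range (cdf μ) := fun _ hy =>
  mem_range_of_exists_le_of_exists_ge continuous_cdf
    ((tendsto_cdf_atBot μ).eventually ((eventually_lt_nhds hy.1).mono fun _ => le_of_lt)).exists
    ((tendsto_cdf_atTop μ).eventually ((eventually_gt_nhds hy.2).mono fun _ => le_of_lt)).exists

theorem strictMono_cdf (h : volume ≪ μ) : StrictMono (cdf μ) := by
  intro a b hab
  have hpos : 0 < μ (Ioc a b) := pos_of_ne_zero fun h0 => hab.not_ge (by simpa using h h0)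
  rwa [← measure_cdf μ, StieltjesFunction.measure_Ioc, ENNReal.ofReal_pos, sub_pos] at hpos

theorem cdf_neg [NullSingletonClass μ] (h : μ.map (fun x => -x) = μ) (x : ℝ) :
    cdf μ (-x) = 1 - cdf μ x := by
  have hreflect : μ (Iic (-x)) = μ (Ici x) := by
    conv_lhs => rw [← h, Measure.map_apply measurable_neg measurableSet_Iic]
    congr 1
    ext
    simp
  rw [cdf_eq_real, cdf_eq_real, measureReal_def, measureReal_def, hreflect,
    ← measure_congr Iio_ae_eq_Iic, ← compl_Iio, prob_compl_eq_one_sub measurableSet_Iio,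
    ENNReal.toReal_sub_of_le prob_le_one ENNReal.one_ne_top, ENNReal.toReal_one]

end ProbabilityTheory

theorem map_add_sub_volume_restrict_Icc (a b : ℝ) :
    (volume.restrict (Icc a b)).map (fun x => a + b - x) = volume.restrict (Icc a b) := by
  have hpre : (fun x => a + b - x) ⁻¹' Icc a b = Icc a b := by
    rw [preimage_const_sub_Icc]
    congr 1 <;> ring
  calc (volume.restrict (Icc a b)).map (fun x => a + b - x)
      = (volume.restrict ((fun x => a + b - x) ⁻¹' Icc a b)).map (fun x => a + b - x) := by
        rw [hpre]
    _ = (volume.map (fun x => a + b - x)).restrict (Icc a b) :=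
        (Measure.restrict_map (measurable_const_sub _) measurableSet_Icc).symm
    _ = volume.restrict (Icc a b) := by
        rw [(Measure.measurePreserving_sub_left volume (a + b)).map_eq]

section UniformLaw

variable {Ω : Type*} [MeasurableSpace Ω] {P : Measure Ω} {X : Ω → ℝ} {a b : ℝ}

theorem ae_mem_Ioo_of_map_eq_volume_restrict_Icc (hX : Measurable X)
    (hlaw : P.map X = volume.restrict (Icc a b)) : ∀ᵐ ω ∂P, X ω ∈ Ioo a b := by
  refine ae_of_ae_map hX.aemeasurable ?_
  rw [hlaw, ae_restrict_iff' measurableSet_Icc]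
  exact (Ioo_ae_eq_Icc (μ := volume)).symm.mem_iff.mono fun x hx hIcc => hx.1 hIcc

theorem identDistrib_add_sub_of_map_eq_volume_restrict_Icc (hX : Measurable X)
    (hlaw : P.map X = volume.restrict (Icc a b)) :
    IdentDistrib X (fun ω => a + b - X ω) P P where
  aemeasurable_fst := hX.aemeasurable
  aemeasurable_snd := (measurable_const.sub hX).aemeasurable
  map_eq := calc
    P.map X = (P.map X).map (fun x => a + b - x) := by rw [hlaw, map_add_sub_volume_restrict_Icc]
    _ = P.map (fun ω => a + b - X ω) := Measure.map_map (measurable_const_sub _) hX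

end UniformLaw

instance : NullSingletonClass (gaussianReal 0 1) := nullSingletonClass_gaussianReal one_ne_zero

theorem stdNormalCDF_eq_cdf : stdNormalCDF = cdf (gaussianReal 0 1) := by
  ext x
  rw [cdf_eq_real, measureReal_def, gaussianReal_apply_eq_integral _ one_ne_zero,
    ENNReal.toReal_ofReal
      (setIntegral_nonneg measurableSet_Iic fun t _ => gaussianPDFReal_nonneg _ _ _)]
  simp [stdNormalCDF, gaussianPDFReal]

theorem strictMono_stdNormalCDF : StrictMono stdNormalCDF :=
  stdNormalCDF_eq_cdf ▸ strictMono_cdf (gaussianReal_absolutelyContinuous' 0 one_ne_zero)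

theorem stdNormalCDF_neg (x : ℝ) : stdNormalCDF (-x) = 1 - stdNormalCDF x := by
  rw [stdNormalCDF_eq_cdf]
  exact cdf_neg (by simpa using gaussianReal_map_neg (μ := 0) (v := 1)) x

theorem stdNormalCDF_stdNormalQuantile {u : ℝ} (hu : u ∈ Ioo 0 1) :
    stdNormalCDF (stdNormalQuantile u) = u :=
  Function.invFun_eq (stdNormalCDF_eq_cdf ▸ Ioo_subset_range_cdf hu)

theorem stdNormalQuantile_one_sub {u : ℝ} (hu : u ∈ Ioo 0 1) :
    stdNormalQuantile (1 - u) = -stdNormalQuantile u := by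
  apply strictMono_stdNormalCDF.injective
  rw [stdNormalCDF_neg, stdNormalCDF_stdNormalQuantile hu,
    stdNormalCDF_stdNormalQuantile ⟨by linarith [hu.2], by linarith [hu.1]⟩]

-- `Function.invFun f` unfolds to `Function.extend f id (fun _ => Classical.arbitrary ℝ)`.
theorem measurable_stdNormalQuantile : Measurable stdNormalQuantile :=
  (strictMono_stdNormalCDF.monotone.measurable.measurableEmbedding
    strictMono_stdNormalCDF.injective).measurable_extend measurable_id measurable_const

noncomputable def noisyPValue (u z : ℝ) : ℝ := stdNormalCDF (stdNormalQuantile u + z)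

theorem measurable_noisyPValue : Measurable (Function.uncurry noisyPValue) :=
  strictMono_stdNormalCDF.monotone.measurable.comp
    ((measurable_stdNormalQuantile.comp measurable_fst).add measurable_snd)

theorem noisyPValue_one_sub_neg {u : ℝ} (hu : u ∈ Ioo 0 1) (z : ℝ) :
    noisyPValue (1 - u) (-z) = 1 - noisyPValue u z := by
  rw [noisyPValue, noisyPValue, stdNormalQuantile_one_sub hu, ← neg_add, stdNormalCDF_neg]

/-- If `p` is uniform on `[0,1]` and `Z` an independent random variable with distribution
symmetric about `0`, then `p̃ = Φ(Φ⁻¹(p) + Z)` has a distribution symmetric about `1/2`: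
`ℙ(p̃ ≤ t) = ℙ(p̃ ≥ 1 - t)` for all `t ∈ [0,1]`. -/
theorem noisy_uniform_p_value_symmetric
    {Ω : Type*} [MeasurableSpace Ω] (P : Measure Ω) [IsProbabilityMeasure P]
    (p Z : Ω → ℝ) (hp_meas : Measurable p) (hZ_meas : Measurable Z)
    (hp_law : Measure.map p P = volume.restrict (Icc (0 : ℝ) 1))
    (hZ_symm : Measure.map Z P = Measure.map (fun ω => -Z ω) P)
    (hindep : IndepFun p Z P)
    (ptilde : Ω → ℝ)
    (hptilde : ∀ ω, ptilde ω = stdNormalCDF (stdNormalQuantile (p ω) + Z ω)) :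
    ∀ t ∈ Icc (0 : ℝ) 1,
      P {ω | ptilde ω ≤ t} = P {ω | 1 - t ≤ ptilde ω} := by
  intro t _
  obtain rfl : ptilde = fun ω => noisyPValue (p ω) (Z ω) := funext hptilde
  have hp_refl : IdentDistrib p (fun ω => 1 - p ω) P P := by
    simpa using identDistrib_add_sub_of_map_eq_volume_restrict_Icc hp_meas hp_law
  have hZ_refl : IdentDistrib Z (fun ω => -Z ω) P P :=
    ⟨hZ_meas.aemeasurable, hZ_meas.neg.aemeasurable, hZ_symm⟩
  have hpair : IdentDistrib (fun ω => (p ω, Z ω)) (fun ω => (1 - p ω, -Z ω)) P P :=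
    hp_refl.prodMk hZ_refl hindep
      (hindep.comp (measurable_const.sub measurable_id) measurable_neg)
  have hreflect : (fun ω => noisyPValue (1 - p ω) (-Z ω)) =ᵐ[P]
      fun ω => 1 - noisyPValue (p ω) (Z ω) :=
    (ae_mem_Ioo_of_map_eq_volume_restrict_Icc hp_meas hp_law).mono fun ω hω =>
      noisyPValue_one_sub_neg hω (Z ω)
  have hsymm : IdentDistrib (fun ω => noisyPValue (p ω) (Z ω))
      (fun ω => 1 - noisyPValue (p ω) (Z ω)) P P :=
    (hpair.comp measurable_noisyPValue).trans <| IdentDistrib.of_ae_eq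
      (measurable_noisyPValue.comp ((measurable_const.sub hp_meas).prodMk hZ_meas.neg)).aemeasurable
      hreflect
  calc P {ω | noisyPValue (p ω) (Z ω) ≤ t}
      = P {ω | 1 - noisyPValue (p ω) (Z ω) ≤ t} := hsymm.measure_mem_eq measurableSet_Iic
    _ = P {ω | 1 - t ≤ noisyPValue (p ω) (Z ω)} := by simp_rw [sub_le_comm]
end

section
/- Define g(x) = 1 - Φ(x + μ) - e^{-ε}(1 - Φ(x) - δ(ε)) where δ(ε) = Φ(-ε/μ + μ/2) - e^{ε}Φ(-ε/μ - μ/2), μ > 0, ε > 0. Then g attains its global minimum at x = ε/μ - μ/2 and g(ε/μ - μ/2) = 0. -/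
/-!
Since `φ(x + μ) = e^{-μ(x + μ/2)} φ(x)`, the derivative of `g` is
`φ(x) (e^{-ε} - e^{-μ(x + μ/2)})`, which is negative left of `x₀ = ε/μ - μ/2` and positive
right of it, so `g` is minimal at `x₀`. There `-ε/μ + μ/2 = -x₀` and `-ε/μ - μ/2 = -(x₀ + μ)`,
and `g(x₀) = 0` follows from the symmetry `Φ(x) + Φ(-x) = 1`.
-/

open MeasureTheory Set Real

open ProbabilityTheory

lemma gaussianPDFReal_zero_neg (v : NNReal) (x : ℝ) :
    gaussianPDFReal 0 v (-x) = gaussianPDFReal 0 v x := by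
  simp [gaussianPDFReal]

lemma gaussianPDFReal_add_eq_exp_mul (m : ℝ) (v : NNReal) (x a : ℝ) :
    gaussianPDFReal m v (x + a) = rexp (-(a * (x - m + a / 2)) / v) * gaussianPDFReal m v x := by
  rcases eq_or_ne v 0 with rfl | hv
  · simp
  simp only [gaussianPDFReal]
  rw [mul_left_comm, ← Real.exp_add]
  congr 2
  field_simp
  ring

lemma stdNormalCDF_eq_integral_gaussianPDFReal (x : ℝ) :
    stdNormalCDF x = ∫ t in Iic x, gaussianPDFReal 0 1 t := by
  simp [stdNormalCDF, gaussianPDFReal]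

lemma stdNormalCDF_add_stdNormalCDF_neg (x : ℝ) : stdNormalCDF x + stdNormalCDF (-x) = 1 := by
  have hφ := integrable_gaussianPDFReal 0 1
  have h_neg : stdNormalCDF (-x) = ∫ t in Ioi x, gaussianPDFReal 0 1 t := by
    rw [stdNormalCDF_eq_integral_gaussianPDFReal, ← integral_comp_neg_Ioi]
    simp only [gaussianPDFReal_zero_neg]
  rw [h_neg, stdNormalCDF_eq_integral_gaussianPDFReal,
    intervalIntegral.integral_Iic_add_Ioi hφ.integrableOn hφ.integrableOn,
    integral_gaussianPDFReal_eq_one 0 one_ne_zero]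

lemma hasDerivAt_stdNormalCDF (x : ℝ) : HasDerivAt stdNormalCDF (gaussianPDFReal 0 1 x) x := by
  have hφ := integrable_gaussianPDFReal 0 1
  have hcont : Continuous (gaussianPDFReal 0 1) := by
    rw [gaussianPDFReal_def]
    fun_prop
  have h_eq : stdNormalCDF = fun y => stdNormalCDF 0 + ∫ t in (0 : ℝ)..y, gaussianPDFReal 0 1 t := by
    ext y
    simp only [stdNormalCDF_eq_integral_gaussianPDFReal,
      ← intervalIntegral.integral_Iic_sub_Iic hφ.integrableOn hφ.integrableOn]
    ring
  rw [h_eq]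
  exact (intervalIntegral.integral_hasDerivAt_right hφ.intervalIntegrable
    hcont.aestronglyMeasurable.stronglyMeasurableAtFilter hcont.continuousAt).const_add _

lemma hasDerivAt_mul_stdNormalCDF_sub_stdNormalCDF_add (c μ x : ℝ) :
    HasDerivAt (fun y => c * stdNormalCDF y - stdNormalCDF (y + μ))
      (gaussianPDFReal 0 1 x * (c - rexp (-(μ * (x + μ / 2))))) x := by
  have h_shift := (hasDerivAt_stdNormalCDF (x + μ)).comp_add_const x μ
  refine (((hasDerivAt_stdNormalCDF x).const_mul c).sub h_shift).congr_deriv ?_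
  rw [gaussianPDFReal_add_eq_exp_mul]
  simp only [sub_zero, NNReal.coe_one, div_one]
  ring

theorem gaussian_tail_min_general (μ ε : ℝ) (hμ : 0 < μ)
    (g : ℝ → ℝ)
    (hg : ∀ x, g x = 1 - stdNormalCDF (x + μ) -
      Real.exp (-ε) * (1 - stdNormalCDF x -
        (stdNormalCDF (-ε / μ + μ / 2) - Real.exp ε * stdNormalCDF (-ε / μ - μ / 2)))) :
    (∀ x, g (ε / μ - μ / 2) ≤ g x) ∧ g (ε / μ - μ / 2) = 0 := by
  set x₀ := ε / μ - μ / 2 with hx₀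
  set δ := stdNormalCDF (-ε / μ + μ / 2) - Real.exp ε * stdNormalCDF (-ε / μ - μ / 2)
  have hg_eq : g = fun y => (rexp (-ε) * stdNormalCDF y - stdNormalCDF (y + μ)) +
      (1 - rexp (-ε) * (1 - δ)) := funext fun y => by rw [hg]; ring
  have hderiv (x : ℝ) : HasDerivAt g
      (gaussianPDFReal 0 1 x * (rexp (-ε) - rexp (-(μ * (x + μ / 2))))) x := by
    rw [hg_eq]
    exact (hasDerivAt_mul_stdNormalCDF_sub_stdNormalCDF_add _ μ x).add_const _
  have hε_eq : ε = μ * (x₀ + μ / 2) := by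
    rw [hx₀]
    field_simp
    ring
  have h_min : IsMinOn g univ x₀ := by
    refine isMinOn_univ_of_deriv (hderiv x₀).continuousAt
      (fun x _ => (hderiv x).differentiableAt.differentiableWithinAt)
      (fun x _ => (hderiv x).differentiableAt.differentiableWithinAt) ?_ ?_
    · intro x hx
      rw [(hderiv x).deriv]
      refine mul_nonpos_of_nonneg_of_nonpos (gaussianPDFReal_nonneg _ _ _) ?_
      rw [sub_nonpos, exp_le_exp, neg_le_neg_iff, hε_eq]
      gcongr
      exact le_of_lt hx
    · intro x hx
      rw [(hderiv x).deriv]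
      refine mul_nonneg (gaussianPDFReal_nonneg _ _ _) ?_
      rw [sub_nonneg, exp_le_exp, neg_le_neg_iff, hε_eq]
      gcongr
      exact le_of_lt hx
  refine ⟨isMinOn_univ_iff.1 h_min, ?_⟩
  have h_left : -ε / μ + μ / 2 = -x₀ := by rw [hx₀]; ring
  have h_right : -ε / μ - μ / 2 = -(x₀ + μ) := by rw [hx₀]; ring
  have h_exp : rexp (-ε) * rexp ε = 1 := by rw [← exp_add]; simp
  rw [hg]
  simp only [δ]
  rw [h_left, h_right]
  linear_combination rexp (-ε) * stdNormalCDF_add_stdNormalCDF_neg x₀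
    - stdNormalCDF_add_stdNormalCDF_neg (x₀ + μ) - stdNormalCDF (-(x₀ + μ)) * h_exp

/-- The function `g(x) = 1 - Φ(x + μ) - e^{-ε}(1 - Φ(x) - δ(ε))` with
`δ(ε) = Φ(-ε/μ + μ/2) - e^ε Φ(-ε/μ - μ/2)` attains its global minimum at
`x = ε/μ - μ/2`, where it vanishes. -/
theorem gaussian_tail_min (μ ε : ℝ) (hμ : 0 < μ) (hε : 0 < ε)
    (g : ℝ → ℝ)
    (hg : ∀ x, g x = 1 - stdNormalCDF (x + μ) -
      Real.exp (-ε) * (1 - stdNormalCDF x -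
        (stdNormalCDF (-ε / μ + μ / 2) - Real.exp ε * stdNormalCDF (-ε / μ - μ / 2)))) :
    (∀ x, g (ε / μ - μ / 2) ≤ g x) ∧ g (ε / μ - μ / 2) = 0 :=
  gaussian_tail_min_general μ ε hμ g hg
end

section
/- Let ε ≤ 0.5, δ ≤ 0.1, and m ≥ 10 be an integer. Set ε₀ = 2ε/√(10 m log(1/δ)). Then ε₀ √(2 m log(1/δ)) + m ε₀ (e^{ε₀} - 1) ≤ ε. -/
set_option maxHeartbeats 1000000


/-- Advanced composition bound: for `ε ≤ 0.5`, `δ ≤ 0.1`, `m ≥ 10` and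
`ε₀ = 2ε/√(10 m log(1/δ))`, one has
`ε₀ √(2 m log(1/δ)) + m ε₀ (e^{ε₀} - 1) ≤ ε`. -/
theorem advanced_composition_bound (ε δ : ℝ) (m : ℕ)
    (hε0 : 0 < ε) (hε : ε ≤ 0.5) (hδ0 : 0 < δ) (hδ : δ ≤ 0.1) (hm : 10 ≤ m)
    (ε₀ : ℝ) (hε₀ : ε₀ = 2 * ε / Real.sqrt (10 * m * Real.log (1 / δ))) :
    ε₀ * Real.sqrt (2 * m * Real.log (1 / δ)) + m * ε₀ * (Real.exp ε₀ - 1) ≤ ε := by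
  have hm10 : (10:ℝ) ≤ (m:ℝ) := by exact_mod_cast hm
  set L := Real.log (1/δ) with hLdef
  have hL : (2.07:ℝ) ≤ L := by
    have h8 : (8:ℝ) ≤ 1/δ := by
      rw [le_div_iff₀ hδ0]; nlinarith
    have hle : Real.log 8 ≤ L := Real.log_le_log (by norm_num) h8
    have hlog8 : Real.log 8 = 3 * Real.log 2 := by
      rw [show (8:ℝ) = 2^3 by norm_num, Real.log_pow]; push_cast; ring
    nlinarith [Real.log_two_gt_d9]
  have hLpos : (0:ℝ) < L := by linarith
  have harg : (0:ℝ) ≤ 10 * m * L := by positivity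
  set S := Real.sqrt (10 * m * L) with hSdef
  have hS2 : S^2 = 10 * m * L := Real.sq_sqrt harg
  have hS14 : (14.3:ℝ) ≤ S := by
    rw [hSdef, show (14.3:ℝ) = Real.sqrt (14.3^2) from (Real.sqrt_sq (by norm_num)).symm]
    apply Real.sqrt_le_sqrt
    nlinarith
  have hSpos : (0:ℝ) < S := by linarith
  have hε₀S : ε₀ * S = 2 * ε := by
    rw [hε₀, div_mul_cancel₀ _ hSpos.ne']
  have hε₀pos : 0 < ε₀ := by
    rw [hε₀]; exact div_pos (by linarith) hSpos
  have hε₀le : ε₀ ≤ 0.07 := by nlinarith [hε₀S, hS14, hε, hε₀pos]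
  have hkey : ε₀^2 * (10 * m * L) = 4 * ε^2 := by
    rw [← hS2]; linear_combination (ε₀ * S + 2 * ε) * hε₀S
  have h2mL : (0:ℝ) ≤ 2 * m * L := by positivity
  have ha2 : (ε₀ * Real.sqrt (2 * m * L))^2 = 0.8 * ε^2 := by
    rw [mul_pow, Real.sq_sqrt h2mL]; linear_combination (1/5) * hkey
  have haeq : ε₀ * Real.sqrt (2 * m * L) = Real.sqrt 0.8 * ε := by
    have hnn : 0 ≤ ε₀ * Real.sqrt (2 * m * L) := by positivity
    rw [← Real.sqrt_sq hnn, ha2, Real.sqrt_mul (by norm_num : (0:ℝ) ≤ 0.8),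
        Real.sqrt_sq hε0.le]
  have hsqrt08 : Real.sqrt 0.8 ≤ 0.8945 := by
    rw [show (0.8945:ℝ) = Real.sqrt (0.8945^2) from (Real.sqrt_sq (by norm_num)).symm]
    exact Real.sqrt_le_sqrt (by norm_num)
  have hterm1 : ε₀ * Real.sqrt (2 * m * L) ≤ 0.8945 * ε := by
    rw [haeq]; nlinarith
  have hexp1 : (1 - ε₀) * Real.exp ε₀ ≤ 1 := by
    have h := Real.add_one_le_exp (-ε₀)
    rw [Real.exp_neg] at h
    have hep := Real.exp_pos ε₀
    calc (1 - ε₀) * Real.exp ε₀ ≤ (Real.exp ε₀)⁻¹ * Real.exp ε₀ := by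
          apply mul_le_mul_of_nonneg_right _ hep.le; linarith
      _ = 1 := inv_mul_cancel₀ hep.ne'
  have hexpinv : Real.exp ε₀ ≤ 1/0.93 := by
    have h93 : (0.93:ℝ) * Real.exp ε₀ ≤ (1 - ε₀) * Real.exp ε₀ :=
      mul_le_mul_of_nonneg_right (by linarith) (Real.exp_pos ε₀).le
    linarith
  have hexp2 : Real.exp ε₀ - 1 ≤ ε₀ / 0.93 := by
    have h := mul_le_mul_of_nonneg_left hexpinv hε₀pos.le
    ring_nf at h hexp1 ⊢
    linarith
  have hterm2 : (m:ℝ) * ε₀ * (Real.exp ε₀ - 1) ≤ 0.1045 * ε := by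
    have h1 : (m:ℝ) * ε₀ * (Real.exp ε₀ - 1) ≤ (m:ℝ) * ε₀ * (ε₀ / 0.93) :=
      mul_le_mul_of_nonneg_left hexp2 (by positivity)
    have ht : (0:ℝ) ≤ (m:ℝ) * ε₀^2 := by positivity
    have h2 : (m:ℝ) * ε₀ * (ε₀ / 0.93) ≤ 0.1045 * ε := by
      have hA : (0:ℝ) ≤ ((m:ℝ) * ε₀^2) * (L - 2.07) := mul_nonneg ht (by linarith)
      have hB : (0:ℝ) ≤ ε * (0.5 - ε) := mul_nonneg hε0.le (by linarith)
      ring_nf at hA hB hkey ⊢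
      nlinarith [hA, hB, hkey]
    linarith
  linarith
end

section
/- Let μ_p be a probability measure on [0,1] that is mirror-conservative: μ_p[a₁,a₂] ≤ μ_p[1-a₂,1-a₁] for all 0 ≤ a₁ ≤ a₂ ≤ 1/2. Then there exist a measure μ_s on [0,1] symmetric about 1/2 (μ_s(a,b] = μ_s[1-b,1-a) for all 0 ≤ a ≤ b ≤ 1) and a nonnegative measure μ_r supported on (1/2, 1] such that μ_p = μ_s + μ_r. -/
/-
Write `ν` for the restriction of `μp` to `(-∞, 1/2)` and `ν'` for its reflection under
`x ↦ 1 - x`. The symmetric part is `μs = ν + ν' + μp|{1/2}`, and the remainder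
`μr = μp|(1/2, ∞) - ν'` is a genuine measure once `ν' ≤ μp|(1/2, ∞)`. On half-open intervals this
inequality is mirror-conservativity (passed to the limit from closed intervals), and for finite
measures on `ℝ` a comparison on all intervals `(a, b]` is a comparison of measures: the
difference of the two distribution functions is then monotone and right-continuous, hence a
Stieltjes function.
-/

open MeasureTheory Set

namespace MeasureTheory.Measure

theorem continuousWithinAt_measureReal_Iic (μ : Measure ℝ) [IsFiniteMeasure μ] (x : ℝ) :
    ContinuousWithinAt (fun y ↦ μ.real (Iic y)) (Ici x) x := by
  rw [← continuousWithinAt_Ioi_iff_Ici]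
  have hinter : ⋂ r > x, Iic r = Iic x := by
    ext z
    simpa using ⟨le_of_forall_gt_imp_ge_of_dense, fun hzx r hr ↦ hzx.trans hr.le⟩
  have h := tendsto_measure_biInter_gt (μ := μ) (s := Iic) (a := x)
    (fun _ _ ↦ measurableSet_Iic.nullMeasurableSet) (fun _ _ _ ↦ Iic_subset_Iic.2)
    ⟨x + 1, by linarith, measure_ne_top μ _⟩
  rw [hinter] at h
  exact (ENNReal.tendsto_toReal (measure_ne_top μ _)).comp h

theorem measureReal_Iic_sub_measureReal_Iic (μ : Measure ℝ) [IsFiniteMeasure μ] {a b : ℝ}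
    (hab : a ≤ b) : μ.real (Iic b) - μ.real (Iic a) = μ.real (Ioc a b) := by
  rw [← Iic_union_Ioc_eq_Iic hab, measureReal_union (Iic_disjoint_Ioc le_rfl) measurableSet_Ioc]
  ring

theorem le_of_forall_measure_Ioc_le {μ ν : Measure ℝ} [IsFiniteMeasure μ] [IsFiniteMeasure ν]
    (h : ∀ a b, ν (Ioc a b) ≤ μ (Ioc a b)) : ν ≤ μ := by
  have hreal : ∀ a b, ν.real (Ioc a b) ≤ μ.real (Ioc a b) := fun a b ↦
    ENNReal.toReal_mono (measure_ne_top μ _) (h a b)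
  let F : StieltjesFunction ℝ :=
    { toFun := fun x ↦ μ.real (Iic x) - ν.real (Iic x)
      mono' := fun x y hxy ↦ by
        linarith [measureReal_Iic_sub_measureReal_Iic μ hxy,
          measureReal_Iic_sub_measureReal_Iic ν hxy, hreal x y]
      right_continuous' := fun x ↦
        (continuousWithinAt_measureReal_Iic μ x).sub (continuousWithinAt_measureReal_Iic ν x) }
  calc ν ≤ ν + F.measure := Measure.le_add_right le_rfl
    _ = μ := by
      refine (ext_of_Ioc μ _ fun a b hab ↦ ?_).symm
      have hF : F b - F a = (μ (Ioc a b) - ν (Ioc a b)).toReal := by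
        rw [ENNReal.toReal_sub_of_le (h a b) (measure_ne_top μ _), ← measureReal_def,
          ← measureReal_def]
        linarith [measureReal_Iic_sub_measureReal_Iic μ hab.le,
          measureReal_Iic_sub_measureReal_Iic ν hab.le]
      rw [add_apply, F.measure_Ioc, hF, ENNReal.ofReal_toReal (by finiteness),
        add_tsub_cancel_of_le (h a b)]

theorem restrict_Iio_add_restrict_singleton_add_restrict_Ioi (μ : Measure ℝ) (a : ℝ) :
    μ.restrict (Iio a) + μ.restrict {a} + μ.restrict (Ioi a) = μ := by
  have hdisj : Disjoint (Iio a) (Ioi a) := (Iio_disjoint_Ici le_rfl).mono_right Ioi_subset_Ici_self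
  rw [add_right_comm, ← restrict_union hdisj measurableSet_Ioi, Iio_union_Ioi, add_comm,
    restrict_add_restrict_compl (measurableSet_singleton a)]

theorem map_restrict_singleton_of_apply_eq {α : Type*} [MeasurableSpace α]
    [MeasurableSingletonClass α] {g : α → α} (hg : Measurable g) (μ : Measure α) {a : α}
    (ha : g a = a) : (μ.restrict {a}).map g = μ.restrict {a} := by
  rw [restrict_singleton, Measure.map_smul, map_dirac' hg, ha]

theorem map_add_map_of_involutive {α : Type*} [MeasurableSpace α] {g : α → α}
    (hg : Measurable g) (hinv : Function.Involutive g) (ν : Measure α) :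
    (ν + ν.map g).map g = ν + ν.map g := by
  rw [Measure.map_add _ _ hg, map_map hg hg, hinv.comp_self, map_id, add_comm]

end MeasureTheory.Measure

theorem measure_Ico_le_of_forall_measure_Icc_le {μ : Measure ℝ} {c d : ℝ} {C : ENNReal}
    (h : ∀ e < d, μ (Icc c e) ≤ C) : μ (Ico c d) ≤ C := by
  obtain ⟨u, hu_mono, hu_lt, hu_lim⟩ := exists_seq_strictMono_tendsto d
  have hunion : Ico c d = ⋃ n, Icc c (u n) := by
    ext z
    simp only [mem_Ico, mem_iUnion, mem_Icc]
    refine ⟨fun ⟨hcz, hzd⟩ ↦ ?_, fun ⟨n, hcz, hzu⟩ ↦ ⟨hcz, hzu.trans_lt (hu_lt n)⟩⟩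
    obtain ⟨n, hn⟩ := (hu_lim.eventually (lt_mem_nhds hzd)).exists
    exact ⟨n, hcz, hn.le⟩
  have hmono : Monotone fun n ↦ Icc c (u n) := fun m n hmn ↦
    Icc_subset_Icc_right (hu_mono.monotone hmn)
  rw [hunion, hmono.measure_iUnion]
  exact iSup_le fun n ↦ h _ (hu_lt n)

section Mirror

variable {μ : Measure ℝ}

theorem measure_Ioc_eq_measure_Ico_one_sub_of_map_eq (h : μ.map (fun x ↦ 1 - x) = μ)
    (a b : ℝ) : μ (Ioc a b) = μ (Ico (1 - b) (1 - a)) := by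
  conv_lhs => rw [← h]
  rw [Measure.map_apply (by fun_prop) measurableSet_Ioc, preimage_const_sub_Ioc]

theorem measure_Ico_le_measure_Ioc_one_sub (hsupp : μ (Icc 0 1)ᶜ = 0)
    (hmirror : ∀ a₁ a₂ : ℝ, 0 ≤ a₁ → a₁ ≤ a₂ → a₂ ≤ 1 / 2 →
      μ (Icc a₁ a₂) ≤ μ (Icc (1 - a₂) (1 - a₁)))
    {c d : ℝ} (hd : d ≤ 1 / 2) : μ (Ico c d) ≤ μ (Ioc (1 - d) (1 - c)) := by
  refine measure_Ico_le_of_forall_measure_Icc_le fun e he ↦ ?_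
  rw [← measure_inter_conull hsupp, Icc_inter_Icc]
  rcases le_or_gt (max c 0) (min e 1) with hce | hec
  · refine (hmirror _ _ (le_max_right c 0) hce ?_).trans (measure_mono fun x hx ↦ ?_)
    · exact (min_le_left e 1).trans (he.le.trans hd)
    · exact ⟨by linarith [hx.1, min_le_left e 1], by linarith [hx.2, le_max_left c 0]⟩
  · simp [Icc_eq_empty_of_lt hec]

theorem map_one_sub_restrict_Iio_le_restrict_Ioi [IsFiniteMeasure μ]
    (hsupp : μ (Icc 0 1)ᶜ = 0)
    (hmirror : ∀ a₁ a₂ : ℝ, 0 ≤ a₁ → a₁ ≤ a₂ → a₂ ≤ 1 / 2 →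
      μ (Icc a₁ a₂) ≤ μ (Icc (1 - a₂) (1 - a₁))) :
    (μ.restrict (Iio (1 / 2))).map (fun x ↦ 1 - x) ≤ μ.restrict (Ioi (1 / 2)) := by
  have hg : Measurable fun x : ℝ ↦ 1 - x := by fun_prop
  refine Measure.le_of_forall_measure_Ioc_le fun a b ↦ ?_
  rw [Measure.map_apply hg measurableSet_Ioc, Measure.restrict_apply (hg measurableSet_Ioc),
    Measure.restrict_apply measurableSet_Ioc, preimage_const_sub_Ioc, Ico_inter_Iio,
    Ioc_inter_Ioi]
  refine (measure_Ico_le_measure_Ioc_one_sub hsupp hmirror (min_le_right _ _)).trans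
    (measure_mono (Ioc_subset_Ioc ?_ (by linarith)))
  exact max_le (by linarith [min_le_left (1 - a) (1 / 2)])
    (by linarith [min_le_right (1 - a) (1 / 2)])

end Mirror

/-- A mirror-conservative probability measure on `[0,1]` decomposes as the sum of a
measure symmetric about `1/2` and a nonnegative measure supported on `(1/2, 1]`. -/
theorem mirror_conservative_decomposition (μp : Measure ℝ) [IsProbabilityMeasure μp]
    (hsupp : μp (Icc (0 : ℝ) 1)ᶜ = 0)
    (hmirror : ∀ a₁ a₂ : ℝ, 0 ≤ a₁ → a₁ ≤ a₂ → a₂ ≤ 1 / 2 →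
      μp (Icc a₁ a₂) ≤ μp (Icc (1 - a₂) (1 - a₁))) :
    ∃ μs μr : Measure ℝ,
      μp = μs + μr ∧
      (∀ a b : ℝ, 0 ≤ a → a ≤ b → b ≤ 1 → μs (Ioc a b) = μs (Ico (1 - b) (1 - a))) ∧
      μr (Ioc (1 / 2 : ℝ) 1)ᶜ = 0 := by
  have hg : Measurable fun x : ℝ ↦ 1 - x := by fun_prop
  set ν := μp.restrict (Iio (1 / 2))
  have hle : ν.map (fun x ↦ 1 - x) ≤ μp.restrict (Ioi (1 / 2)) :=
    map_one_sub_restrict_Iio_le_restrict_Ioi hsupp hmirror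
  refine ⟨ν + ν.map (fun x ↦ 1 - x) + μp.restrict {1 / 2},
    μp.restrict (Ioi (1 / 2)) - ν.map (fun x ↦ 1 - x), ?_, fun a b _ _ _ ↦ ?_, ?_⟩
  · rw [add_right_comm ν, add_assoc, add_comm (ν.map _), Measure.sub_add_cancel_of_le hle]
    exact (μp.restrict_Iio_add_restrict_singleton_add_restrict_Ioi (1 / 2)).symm
  · refine measure_Ioc_eq_measure_Ico_one_sub_of_map_eq ?_ a b
    rw [Measure.map_add _ _ hg, Measure.map_add_map_of_involutive hg (sub_sub_cancel 1),
      Measure.map_restrict_singleton_of_apply_eq hg _ (by norm_num)]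
  · refine Measure.absolutelyContinuous_of_le Measure.sub_le ?_
    rw [Measure.restrict_apply measurableSet_Ioc.compl]
    refine measure_mono_null ?_ hsupp
    exact fun x ⟨hx, hx'⟩ hx01 ↦ hx ⟨hx', hx01.2⟩
end
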